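/- Consider an instance of P_m||C_max with m ≥ 2 machines and exactly n = 2m + 1 jobs with processing times p_1 ≥ p_2 ≥ … ≥ p_n ≥ 0, and suppose p_{2m+1} ≥ p_1 − p_m. If an LPT′ schedule (obtained by placing the critical job 2m+1 first and then list-scheduling jobs 1,…,2m in order) has makespan equal to p_{2m+1} + p_m + p_{2m}, then p_{2m+1} + p_m + p_{2m} ≤ (7/6) · C*; in particular the LPT-REV value is at most (7/6) · C*. -/

import Mathlib

open Finset

/-- Load of machine `i` under schedule `σ` with processing times `p`. -/
def mload {m n : ℕ} (p : Fin n → ℝ) (σ : Fin n → Fin m) (i : Fin m) : ℝ :=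
  ∑ j ∈ Finset.univ.filter (fun j => σ j = i), p j

/-- Makespan of a schedule: the maximum machine load. -/
noncomputable def makespan {m n : ℕ} (p : Fin n → ℝ) (σ : Fin n → Fin m) : ℝ :=
  ⨆ i : Fin m, mload p σ i

/-- Optimal makespan `C*`: minimum makespan over all schedules on `m` machines. -/
noncomputable def optMakespan (m : ℕ) {n : ℕ} (p : Fin n → ℝ) : ℝ :=
  ⨅ σ : Fin n → Fin m, makespan p σ

/-- Processing times are sorted non-increasingly and are nonnegative. -/
def SortedNonneg {n : ℕ} (p : Fin n → ℝ) : Prop :=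
  (∀ i j : Fin n, i ≤ j → p j ≤ p i) ∧ ∀ j, 0 ≤ p j

/-- Load of machine `i` just before job `j` is assigned, when all jobs of `T`
are placed first and the remaining jobs are assigned in index order:
it counts all jobs of `T` on machine `i` plus all jobs of index `< j` on machine `i`. -/
def prefLoad {m n : ℕ} (p : Fin n → ℝ) (σ : Fin n → Fin m) (T : Finset (Fin n))
    (j : Fin n) (i : Fin m) : ℝ :=
  ∑ j' ∈ Finset.univ.filter (fun j' => (j' ∈ T ∨ j' < j) ∧ σ j' = i), p j'

/-- `σ` is a list schedule obtained by first placing all jobs of `T` together on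
one machine and then assigning the remaining jobs in index order (i.e. in
non-increasing order of processing time, for sorted `p`), each to a machine of
minimal current load. -/
def IsLSAfter {m n : ℕ} (p : Fin n → ℝ) (T : Finset (Fin n)) (σ : Fin n → Fin m) : Prop :=
  (∀ j ∈ T, ∀ j' ∈ T, σ j = σ j') ∧
  ∀ j, j ∉ T → ∀ i, prefLoad p σ T j (σ j) ≤ prefLoad p σ T j i

/-- `σ` is an LPT schedule: jobs assigned in order `1,…,n`, each to a machine of
minimal current load. -/
def IsLPT {m n : ℕ} (p : Fin n → ℝ) (σ : Fin n → Fin m) : Prop :=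
  IsLSAfter p ∅ σ

/-- `j'` is the critical job of schedule `σ`: it is assigned to a critical machine
(one whose load equals the makespan), and it is the largest-indexed job assigned
to a critical machine. -/
def IsCriticalJob {m n : ℕ} (p : Fin n → ℝ) (σ : Fin n → Fin m) (j' : Fin n) : Prop :=
  mload p σ (σ j') = makespan p σ ∧
  ∀ j : Fin n, mload p σ (σ j) = makespan p σ → j ≤ j'

/-- The (1-based) position of job `j'` on its machine: the number of jobs of index
`≤ j'` assigned to the same machine as `j'`. -/
def posOn {m n : ℕ} (σ : Fin n → Fin m) (j' : Fin n) : ℕ :=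
  (Finset.univ.filter (fun t => σ t = σ j' ∧ t ≤ j')).card

/-- The tuple of the `k` consecutive jobs `j'-k+1, …, j'` (in 1-based terms). -/
def tupleSet {n : ℕ} (j' : Fin n) (k : ℕ) : Finset (Fin n) :=
  Finset.univ.filter (fun t => t ≤ j' ∧ j'.val < t.val + k)

/-- An LPT′ schedule for critical job `j'`: job `j'` is placed alone on a machine
first, then the remaining jobs are assigned in index order, each to a machine of
minimal current load. -/
def IsLPTprime {m n : ℕ} (p : Fin n → ℝ) (j' : Fin n) (σ' : Fin n → Fin m) : Prop :=
  IsLSAfter p {j'} σ'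

/-- An LPT″ schedule for critical job `j'` in position `k`: jobs `j'-k+1,…,j'` are
placed together on one machine first, then the remaining jobs are assigned in
non-increasing order of processing time, each to a machine of minimal current load. -/
def IsLPTsec {m n : ℕ} (p : Fin n → ℝ) (j' : Fin n) (k : ℕ) (σ'' : Fin n → Fin m) : Prop :=
  IsLSAfter p (tupleSet j' k) σ''

/-!
Write `a = p_m`, `q = p_{2m}`, `r = p_{2m+1}` (1-based; `Fin` indices `m - 1`, `2 * m - 1`,
`2 * m`). In any schedule of the `2m + 1` jobs on `m` machines some machine carries three jobs,
so `C* ≥ 2q + r`. Moreover, either two of the `m` largest jobs share a machine, so `C* ≥ 2a`,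
or they occupy all `m` machines and the machine receiving two of the remaining `m + 1` jobs has
load at least `a + q + r`. Either way `7 C* ≥ 6 (a + q + r)`, and the LPT′ makespan is
`r + a + q`.
-/

theorem SortedNonneg.le_of_val_le {n : ℕ} {p : Fin n → ℝ} (hp : SortedNonneg p) {i j : Fin n}
    (hij : i.val ≤ j.val) : p j ≤ p i :=
  hp.1 i j hij

theorem sum_le_mload {m n : ℕ} {p : Fin n → ℝ} (hp : ∀ j, 0 ≤ p j) {σ : Fin n → Fin m}
    {i : Fin m} {t : Finset (Fin n)} (ht : ∀ j ∈ t, σ j = i) : ∑ j ∈ t, p j ≤ mload p σ i :=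
  Finset.sum_le_sum_of_subset_of_nonneg (fun j hj => by simp [ht j hj]) fun j _ _ => hp j

theorem mload_le_makespan {m n : ℕ} (p : Fin n → ℝ) (σ : Fin n → Fin m) (i : Fin m) :
    mload p σ i ≤ makespan p σ :=
  le_ciSup (Set.finite_range _).bddAbove i

theorem mul_add_le_sum_of_le_of_ne {ι : Type*} [DecidableEq ι] {f : ι → ℝ} {s : Finset ι}
    {z : ι} {k : ℕ} {q r : ℝ} (hq : 0 ≤ q) (hrq : r ≤ q) (hrz : r ≤ f z)
    (hqf : ∀ j ∈ s, j ≠ z → q ≤ f j) (hk : k + 1 ≤ s.card) :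
    k * q + r ≤ ∑ j ∈ s, f j := by
  by_cases hz : z ∈ s
  · have hsum := Finset.card_nsmul_le_sum (s.erase z) f q
      fun j hj => hqf j (Finset.mem_of_mem_erase hj) (Finset.ne_of_mem_erase hj)
    have hcard : (k : ℝ) ≤ (s.erase z).card := by
      rw [Finset.card_erase_of_mem hz]; exact_mod_cast Nat.le_sub_one_of_lt hk
    rw [nsmul_eq_mul] at hsum
    rw [← Finset.add_sum_erase s f hz]
    nlinarith
  · have hsum := Finset.card_nsmul_le_sum s f q
      fun j hj => hqf j hj (ne_of_mem_of_not_mem hj hz)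
    have hcard : (k : ℝ) + 1 ≤ s.card := by exact_mod_cast hk
    rw [nsmul_eq_mul] at hsum
    nlinarith

section TwoMPlusOneJobs

variable {m : ℕ} {p : Fin (2 * m + 1) → ℝ}

theorem SortedNonneg.mul_add_le_sum (hp : SortedNonneg p) {s : Finset (Fin (2 * m + 1))}
    {k : ℕ} (hk : k + 1 ≤ s.card) :
    k * p ⟨2 * m - 1, Nat.sub_lt_succ _ _⟩ + p ⟨2 * m, Nat.lt_add_one _⟩ ≤ ∑ j ∈ s, p j :=
  mul_add_le_sum_of_le_of_ne (hp.2 _) (hp.le_of_val_le (by simp)) le_rfl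
        (fun j _ hj => hp.le_of_val_le (by have := Fin.val_ne_of_ne hj; simp at this ⊢; omega)) hk

theorem SortedNonneg.two_mul_add_le_makespan (hp : SortedNonneg p)
    (τ : Fin (2 * m + 1) → Fin m) :
    2 * p ⟨2 * m - 1, Nat.sub_lt_succ _ _⟩ + p ⟨2 * m, Nat.lt_add_one _⟩ ≤ makespan p τ := by
  obtain ⟨i, -, hi⟩ := Finset.exists_lt_card_fiber_of_mul_lt_card_of_maps_to (n := 2)
    (s := Finset.univ) (t := Finset.univ) (f := τ) (fun _ _ => Finset.mem_univ _)
    (by simp; omega)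
  calc 2 * p ⟨2 * m - 1, Nat.sub_lt_succ _ _⟩ + p ⟨2 * m, Nat.lt_add_one _⟩
      ≤ ∑ j ∈ Finset.univ.filter (τ · = i), p j := by exact_mod_cast hp.mul_add_le_sum hi
    _ ≤ makespan p τ := (sum_le_mload hp.2 (by simp)).trans (mload_le_makespan p τ i)

theorem SortedNonneg.two_mul_le_makespan_or (hp : SortedNonneg p)
    (τ : Fin (2 * m + 1) → Fin m) :
    2 * p ⟨m - 1, (m.sub_le 1).trans_lt (by omega)⟩ ≤ makespan p τ ∨
      p ⟨m - 1, (m.sub_le 1).trans_lt (by omega)⟩ +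
        (p ⟨2 * m - 1, Nat.sub_lt_succ _ _⟩ + p ⟨2 * m, Nat.lt_add_one _⟩) ≤ makespan p τ := by
  have hbig : ∀ k : Fin m,
      p ⟨m - 1, (m.sub_le 1).trans_lt (by omega)⟩ ≤ p (Fin.castLE (by omega) k) :=
    fun k => hp.le_of_val_le (by simp; omega)
  by_cases hinj : Function.Injective fun k : Fin m => τ (Fin.castLE (by omega) k)
  · right
    obtain ⟨t₁, t₂, hne, heq⟩ := Fintype.exists_ne_map_eq_of_card_lt
      (fun t : Fin (m + 1) => τ ⟨m + t, by omega⟩) (by simp)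
    -- the `m` largest jobs occupy every machine, so one of them joins the two small jobs
    obtain ⟨k, hk⟩ := Finite.injective_iff_surjective.mp hinj (τ ⟨m + t₁, by omega⟩)
    have hsmall := hp.mul_add_le_sum (k := 1) (s := {⟨m + t₁, by omega⟩, ⟨m + t₂, by omega⟩})
      (by rw [Finset.card_pair (by simpa [Fin.ext_iff] using hne)])
    rw [Nat.cast_one, one_mul] at hsmall
    calc p ⟨m - 1, (m.sub_le 1).trans_lt (by omega)⟩ +
          (p ⟨2 * m - 1, Nat.sub_lt_succ _ _⟩ + p ⟨2 * m, Nat.lt_add_one _⟩)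
        ≤ p (Fin.castLE (by omega) k) + ∑ j ∈ {⟨m + t₁, by omega⟩, ⟨m + t₂, by omega⟩}, p j := by
          linarith [hbig k]
      _ = ∑ j ∈ insert (Fin.castLE (by omega) k)
            {⟨m + t₁, by omega⟩, ⟨m + t₂, by omega⟩}, p j :=
          (Finset.sum_insert (by simp [Fin.ext_iff]; omega)).symm
      _ ≤ mload p τ (τ ⟨m + t₁, by omega⟩) := sum_le_mload hp.2 (by simp [hk, heq])
      _ ≤ makespan p τ := mload_le_makespan p τ _
  · left
    simp only [Function.Injective, not_forall] at hinj
    obtain ⟨k₁, k₂, heq, hne⟩ := hinj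
    calc 2 * p ⟨m - 1, (m.sub_le 1).trans_lt (by omega)⟩
        ≤ p (Fin.castLE (by omega) k₁) + p (Fin.castLE (by omega) k₂) := by
          linarith [hbig k₁, hbig k₂]
      _ = ∑ j ∈ {Fin.castLE (by omega) k₁, Fin.castLE (by omega) k₂}, p j :=
          (Finset.sum_pair (by simpa [Fin.ext_iff] using hne)).symm
      _ ≤ mload p τ (τ (Fin.castLE (by omega) k₂)) := sum_le_mload hp.2 (by simpa using heq)
      _ ≤ makespan p τ := mload_le_makespan p τ _

theorem SortedNonneg.le_makespan (hp : SortedNonneg p) (τ : Fin (2 * m + 1) → Fin m) :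
    6 / 7 * (p ⟨2 * m, Nat.lt_add_one _⟩ + p ⟨m - 1, (m.sub_le 1).trans_lt (by omega)⟩ +
      p ⟨2 * m - 1, Nat.sub_lt_succ _ _⟩) ≤ makespan p τ := by
  have hqa : p ⟨2 * m - 1, Nat.sub_lt_succ _ _⟩ ≤ p ⟨m - 1, (m.sub_le 1).trans_lt (by omega)⟩ :=
    hp.le_of_val_le (by simp; omega)
  have hrq : p ⟨2 * m, Nat.lt_add_one _⟩ ≤ p ⟨2 * m - 1, Nat.sub_lt_succ _ _⟩ :=
    hp.le_of_val_le (by simp)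
  have hr : 0 ≤ p ⟨2 * m, Nat.lt_add_one _⟩ := hp.2 _
  have h3 := hp.two_mul_add_le_makespan τ
  -- in the first case, `7 C ≥ 3 (2 p_m) + 3 (2 p_{2m} + p_{2m+1}) + 3 p_{2m+1}`
  rcases hp.two_mul_le_makespan_or τ with h | h <;> linarith

theorem SortedNonneg.le_optMakespan (hm : 0 < m) (hp : SortedNonneg p) :
    6 / 7 * (p ⟨2 * m, Nat.lt_add_one _⟩ + p ⟨m - 1, (m.sub_le 1).trans_lt (by omega)⟩ +
      p ⟨2 * m - 1, Nat.sub_lt_succ _ _⟩) ≤ optMakespan m p :=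
  have : Nonempty (Fin (2 * m + 1) → Fin m) := ⟨fun _ => ⟨0, hm⟩⟩
  le_ciInf hp.le_makespan

end TwoMPlusOneJobs

/-- Proposition 11: for `n = 2m+1`, if `p_{2m+1} ≥ p_1 − p_m` and an
LPT′ schedule (job `2m+1`, the critical job of the LPT schedule, placed first, then
jobs `1,…,2m` list-scheduled in order) has makespan `p_{2m+1} + p_m + p_{2m}`, then
`p_{2m+1} + p_m + p_{2m} ≤ (7/6) · C*`; in particular the LPT-REV value is at most
`(7/6) · C*`. -/
theorem stmt8 {m : ℕ} (hm : 2 ≤ m)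
    (p : Fin (2 * m + 1) → ℝ) (hp : SortedNonneg p)
    (σ : Fin (2 * m + 1) → Fin m)
    (σ' : Fin (2 * m + 1) → Fin m)
    (hmk : makespan p σ' =
      p ⟨2 * m, by omega⟩ + p ⟨m - 1, by omega⟩ + p ⟨2 * m - 1, by omega⟩)
    (σ'' : Fin (2 * m + 1) → Fin m) :
    p ⟨2 * m, by omega⟩ + p ⟨m - 1, by omega⟩ + p ⟨2 * m - 1, by omega⟩ ≤
      (7 / 6) * optMakespan m p ∧
    min (makespan p σ) (min (makespan p σ') (makespan p σ'')) ≤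
      (7 / 6) * optMakespan m p := by
  have hopt := hp.le_optMakespan (zero_lt_two.trans_le hm)
  refine ⟨by linarith, ?_⟩
  calc min (makespan p σ) (min (makespan p σ') (makespan p σ''))
      ≤ makespan p σ' := (min_le_right _ _).trans (min_le_left _ _)
    _ ≤ 7 / 6 * optMakespan m p := by linarith
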